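/- Let C be a cyclic code of length n over F_q with generator polynomial g(x) and parity-check polynomial h(x) = (x^n - 1)/g(x). If gcd(g(x), h(x)) = 1, e = exp(C), and r = exp(C⊥), then n = lcm(e, r). -/
import Mathlib


open Polynomial

/-- The order of a polynomial; for a generator polynomial `g` of a cyclic code,
`pord g` is the exponent of the code. -/
noncomputable def pord {F : Type*} [Field F] (f : F[X]) : ℕ :=
  sInf {e : ℕ | 0 < e ∧ f ∣ X ^ e - 1}

lemma reflect_invol {R : Type*} [Semiring R] (N : ℕ) (f : R[X]) :
    reflect N (reflect N f) = f := by
  ext i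
  simp

lemma reverse_X_pow_sub_one {F : Type*} [Field F] {m : ℕ} (hm : 0 < m) :
    (X ^ m - 1 : F[X]).reverse = 1 - X ^ m := by
  have hdeg : (X ^ m - 1 : F[X]).natDegree = m := by
    simpa using (natDegree_X_pow_sub_C (n := m) (r := (1 : F)))
  have h1 : (1 : F[X]) = X ^ 0 := by simp
  rw [Polynomial.reverse, hdeg, reflect_sub, h1, reflect_monomial, reflect_monomial,
    revAt_le (le_refl m), revAt_le (Nat.zero_le m), Nat.sub_self, Nat.sub_zero, pow_zero]

lemma reverse_reverse_of_coeff_zero_ne_zero {F : Type*} [Field F] {h : F[X]}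
    (hh : h.coeff 0 ≠ 0) : h.reverse.reverse = h := by
  have hntd : h.natTrailingDegree = 0 := by
    rw [natTrailingDegree_eq_zero]; exact Or.inr hh
  have hnd : h.reverse.natDegree = h.natDegree := by
    rw [reverse_natDegree, hntd, Nat.sub_zero]
  rw [Polynomial.reverse, hnd, Polynomial.reverse, reflect_invol]

lemma dvd_reverse_of_dvd {F : Type*} [Field F] {h : F[X]} {m : ℕ} (hm : 0 < m)
    (hd : h ∣ X ^ m - 1) : h.reverse ∣ X ^ m - 1 := by
  obtain ⟨k, hk⟩ := hd
  have : (X ^ m - 1 : F[X]).reverse = h.reverse * k.reverse := by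
    rw [hk, reverse_mul_of_domain]
  rw [reverse_X_pow_sub_one hm] at this
  have : h.reverse ∣ 1 - X ^ m := ⟨k.reverse, this⟩
  have := this.neg_right
  rwa [neg_sub] at this

lemma dvd_of_reverse_dvd {F : Type*} [Field F] {h : F[X]} {m : ℕ} (hm : 0 < m)
    (hh : h.coeff 0 ≠ 0) (hd : h.reverse ∣ X ^ m - 1) : h ∣ X ^ m - 1 := by
  have := dvd_reverse_of_dvd hm hd
  rwa [reverse_reverse_of_coeff_zero_ne_zero hh] at this

lemma X_pow_sub_one_dvd {F : Type*} [Field F] {a b : ℕ} (hab : a ∣ b) :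
    (X ^ a - 1 : F[X]) ∣ X ^ b - 1 := by
  obtain ⟨c, rfl⟩ := hab
  have := sub_dvd_pow_sub_pow (X ^ a : F[X]) 1 c
  simpa [← pow_mul] using this

lemma pord_spec {F : Type*} [Field F] {f : F[X]} {m : ℕ} (hm : 0 < m)
    (hd : f ∣ X ^ m - 1) :
    0 < pord f ∧ f ∣ X ^ (pord f) - 1 ∧ pord f ∣ m := by
  have hne : {e : ℕ | 0 < e ∧ f ∣ X ^ e - 1}.Nonempty := ⟨m, hm, hd⟩
  have hmem := Nat.sInf_mem hne
  obtain ⟨hpos, hdvd⟩ := hmem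
  refine ⟨hpos, hdvd, ?_⟩
  set e := pord f with he
  -- division algorithm
  have hsm : m % e < e := Nat.mod_lt _ hpos
  have key : f ∣ X ^ (m % e) - 1 := by
    have h1 : f ∣ X ^ (e * (m / e)) - 1 := hdvd.trans (X_pow_sub_one_dvd ⟨m / e, rfl⟩)
    have hme : m % e + e * (m / e) = m := Nat.mod_add_div m e
    have h2 : (X ^ (m % e) - 1 : F[X]) = (X ^ m - 1) - X ^ (m % e) * (X ^ (e * (m / e)) - 1) := by
      rw [mul_sub, ← pow_add, hme]; ring
    have h3 : f ∣ X ^ (m % e) * (X ^ (e * (m / e)) - 1) := Dvd.dvd.mul_left h1 _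
    rw [h2]
    exact dvd_sub hd h3
  by_cases hs : m % e = 0
  · exact Nat.dvd_of_mod_eq_zero hs
  · exfalso
    have : e ≤ m % e := Nat.sInf_le ⟨Nat.pos_of_ne_zero hs, key⟩
    omega

/-- Let `C` be a cyclic code of length `n` with generator polynomial `g` and
parity-check polynomial `h = (x^n - 1)/g`. The dual code `C⊥` is cyclic with generator
polynomial `h*` (the reciprocal of `h`), so `exp(C⊥) = ord(h*)`. If `gcd(g, h) = 1`,
`e = exp(C)` and `r = exp(C⊥)`, then `n = lcm(e, r)`. -/
theorem stmt9 {F : Type*} [Field F] [Fintype F] (n : ℕ) (hn : 0 < n)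
    (g h : F[X]) (hg : g.Monic) (hgh : g * h = X ^ n - 1) (hcop : IsCoprime g h)
    (e r : ℕ) (he : e = pord g) (hr : r = pord h.reverse) :
    n = Nat.lcm e r := by
  have hXn : (X ^ n - 1 : F[X]) ≠ 0 := by
    intro h0
    have := natDegree_X_pow_sub_C (n := n) (r := (1 : F))
    rw [map_one] at this
    rw [h0] at this
    simp at this
    omega
  have hgd : g ∣ X ^ n - 1 := ⟨h, hgh.symm⟩
  have hhd : h ∣ X ^ n - 1 := ⟨g, by rw [mul_comm]; exact hgh.symm⟩
  have hh0 : h.coeff 0 ≠ 0 := by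
    intro h0
    have : (X ^ n - 1 : F[X]).coeff 0 = g.coeff 0 * h.coeff 0 := by
      rw [← hgh, mul_coeff_zero]
    rw [h0, mul_zero] at this
    have hn0 : n ≠ 0 := hn.ne'
    simp [coeff_X_pow, Ne.symm hn0] at this
  have hhrd : h.reverse ∣ X ^ n - 1 := dvd_reverse_of_dvd hn hhd
  obtain ⟨hepos, hedvd, hedn⟩ := pord_spec hn hgd
  obtain ⟨hrpos, hrdvd, hrdn⟩ := pord_spec hn hhrd
  rw [← he] at hepos hedvd hedn
  rw [← hr] at hrpos hrdvd hrdn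
  have hlcm_dvd : Nat.lcm e r ∣ n := Nat.lcm_dvd hedn hrdn
  have hlpos : 0 < Nat.lcm e r := Nat.lcm_pos hepos hrpos
  -- g and h both divide X^(lcm e r) - 1
  have hgl : g ∣ X ^ Nat.lcm e r - 1 :=
    hedvd.trans (X_pow_sub_one_dvd (Nat.dvd_lcm_left e r))
  have hhrl : h.reverse ∣ X ^ Nat.lcm e r - 1 :=
    hrdvd.trans (X_pow_sub_one_dvd (Nat.dvd_lcm_right e r))
  have hhl : h ∣ X ^ Nat.lcm e r - 1 := dvd_of_reverse_dvd hlpos hh0 hhrl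
  have hghl : (X ^ n - 1 : F[X]) ∣ X ^ Nat.lcm e r - 1 := by
    rw [← hgh]
    exact hcop.mul_dvd hgl hhl
  have hXl : (X ^ Nat.lcm e r - 1 : F[X]) ≠ 0 := by
    intro h0
    have := natDegree_X_pow_sub_C (n := Nat.lcm e r) (r := (1 : F))
    rw [map_one, h0] at this
    simp at this
    omega
  have hle : n ≤ Nat.lcm e r := by
    have := natDegree_le_of_dvd hghl hXl
    rwa [show (X ^ n - 1 : F[X]) = X ^ n - C 1 by simp, natDegree_X_pow_sub_C,
      show (X ^ Nat.lcm e r - 1 : F[X]) = X ^ Nat.lcm e r - C 1 by simp,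
      natDegree_X_pow_sub_C] at this
  exact Nat.le_antisymm hle (Nat.le_of_dvd hn hlcm_dvd)
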